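/- Let T be a finitely generated torsion module over Λ = ℤ[t,t⁻¹] presented by a square matrix A over Λ (i.e. T ≅ Λⁿ/(A·Λⁿ) with det(A) ≠ 0). If the evaluation det(A)(1) = ±1, then multiplication by (t-1) is an automorphism of T. -/
import Mathlib


open LaurentPolynomial

/-- The Laurent polynomial ring `Λ = ℤ[t,t⁻¹]`. -/
abbrev Λ : Type := LaurentPolynomial ℤ

lemma eps_toLaurent (ε : Λ →+* ℤ) (hε : ε (T 1 : Λ) = 1) (f : Polynomial ℤ) :
    ε (Polynomial.toLaurent f) = f.eval 1 := by
  have : ε.comp (Polynomial.toLaurent (R := ℤ)) = Polynomial.evalRingHom 1 := by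
    apply Polynomial.ringHom_ext
    · intro a
      simp [Polynomial.C_eq_intCast]
    · simp [Polynomial.toLaurent_X, hε]
  have := congrArg (fun g => g f) this
  simpa using this

lemma dvd_of_eps_zero (ε : Λ →+* ℤ) (hε : ε (T 1 : Λ) = 1) (p : Λ)
    (hp : ε p = 0) : ((T 1 : Λ) - 1) ∣ p := by
  obtain ⟨m, f, hf⟩ := LaurentPolynomial.exists_T_pow p
  have hT : ε (T (m : ℤ) : Λ) = 1 := by
    have : (T 1 : Λ) ^ m = T (m : ℤ) := by
      rw [T_pow]; norm_num
    rw [← this, map_pow, hε, one_pow]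
  have heval : f.eval 1 = 0 := by
    rw [← eps_toLaurent ε hε, hf, map_mul, hp, zero_mul]
  have hroot : (Polynomial.X - Polynomial.C 1) ∣ f :=
    (Polynomial.dvd_iff_isRoot).mpr heval
  obtain ⟨g, hg⟩ := hroot
  refine ⟨Polynomial.toLaurent g * T (-(m : ℤ)), ?_⟩
  have hunit : (T (m : ℤ) : Λ) * T (-(m : ℤ)) = 1 := by
    rw [← T_add]; simp
  calc p = p * (T (m : ℤ) * T (-(m : ℤ))) := by rw [hunit, mul_one]
    _ = (p * T (m : ℤ)) * T (-(m : ℤ)) := by ring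
    _ = Polynomial.toLaurent f * T (-(m : ℤ)) := by rw [hf]
    _ = ((T 1 : Λ) - 1) * (Polynomial.toLaurent g * T (-(m : ℤ))) := by
        rw [hg, map_mul]
        simp [Polynomial.toLaurent_X]
        ring

/-- Let `T = Λⁿ/(A·Λⁿ)` be the torsion `Λ`-module presented by a square
matrix `A` over `Λ` with `det A ≠ 0`.  If the evaluation of `det A` at `t = 1`
(its image under the unique ring homomorphism `ε : Λ → ℤ` with `ε t = 1`) is `±1`,
then multiplication by `t - 1` is an automorphism of `T`, i.e. bijective. -/
theorem t_sub_one_bijective_of_presentation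
    (n : ℕ) (A : Matrix (Fin n) (Fin n) Λ) (hA : A.det ≠ 0)
    (ε : Λ →+* ℤ) (hε : ε (T 1 : Λ) = 1)
    (hdet : ε A.det = 1 ∨ ε A.det = -1) :
    Function.Bijective
      (fun x : (Fin n → Λ) ⧸ LinearMap.range (Matrix.toLin' A) =>
        ((T 1 : Λ) - 1) • x) := by
  set c : ℤ := ε A.det with hc
  have hcc : ((c : Λ)) * (c : Λ) = 1 := by
    rcases hdet with h | h <;> rw [← hc] at * <;> rw [h] <;> norm_num
  have hεz : ε (A.det - (c : Λ)) = 0 := by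
    simp [hc]
  obtain ⟨q, hq⟩ := dvd_of_eps_zero ε hε _ hεz
  -- det A annihilates the quotient
  have hann : ∀ x : (Fin n → Λ) ⧸ LinearMap.range (Matrix.toLin' A),
      A.det • x = 0 := by
    intro x
    obtain ⟨y, rfl⟩ := Submodule.Quotient.mk_surjective _ x
    rw [← Submodule.Quotient.mk_smul, Submodule.Quotient.mk_eq_zero]
    refine ⟨A.adjugate.mulVec y, ?_⟩
    rw [Matrix.toLin'_apply, Matrix.mulVec_mulVec, Matrix.mul_adjugate,
      Matrix.smul_mulVec, Matrix.one_mulVec]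
  have key : ∀ x : (Fin n → Λ) ⧸ LinearMap.range (Matrix.toLin' A),
      ((T 1 : Λ) - 1) • ((-(c : Λ) * q) • x) = x := by
    intro x
    rw [smul_smul]
    have h1 : ((T 1 : Λ) - 1) * (-(c : Λ) * q) = -(c : Λ) * (A.det - (c : Λ)) := by
      rw [hq]; ring
    rw [h1, ← smul_smul, sub_smul, hann, zero_sub, smul_neg, neg_smul, neg_neg,
      smul_smul, hcc, one_smul]
  refine Function.bijective_iff_has_inverse.mpr ⟨fun x => (-(c : Λ) * q) • x, ?_, ?_⟩
  · intro x
    simp only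
    rw [smul_smul, mul_comm, ← smul_smul]
    exact key x
  · intro x
    exact key x
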